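/- The generalized Apostol-Euler polynomials of order 2α at γ = −1/2 satisfy E_n^{(2α)}(x; −1/2) = 2^{4α} · Σ_{k=0}^{n} C(n,k) · (Σ_{i=0}^{k} ⟨−2α⟩_i · (−1)^i · S(k,i)) · x^{n−k}. -/

import Mathlib

open Finset PowerSeries

/-- Stirling numbers of the second kind. -/
def stirling2 : ℕ → ℕ → ℕ
  | 0, 0 => 1
  | 0, _ + 1 => 0
  | _ + 1, 0 => 0
  | n + 1, k + 1 => (k + 1) * stirling2 n (k + 1) + stirling2 n k

/-- The falling factorial `⟨x⟩_i = x(x-1)⋯(x-i+1)`. -/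
def fall (x : ℚ) (m : ℕ) : ℚ := ∏ j ∈ Finset.range m, (x - j)

/-!
Since `1 - e^t/2 = (2 - e^t)/2`, the generating function of `E_n^{(2α)}(x; -1/2)` is
`2^{4α} (2 - e^t)^{-2α} e^{xt}`, and the claim says that `(2 - e^t)^{-m}` has exponential
generating function `∑ b_m(k) t^k/k!` with `b_m(k) = ∑_i m(m+1)⋯(m+i-1) S(k,i)`
(note `⟨-m⟩_i (-1)^i = m(m+1)⋯(m+i-1)`). This follows from `(2 - e^t) B_{m+1} = B_m`, which on
coefficients reduces to the recurrence `∑_k C(n,k) S(k,i) = S(n+1,i+1)` together with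
`(m+1)^{(i+1)} = m^{(i+1)} + (i+1) (m+1)^{(i)}` for rising factorials.
-/

theorem stirling2_eq_stirlingSecond : stirling2 = Nat.stirlingSecond := by
  funext n k
  induction n generalizing k with
  | zero => cases k <;> rfl
  | succ n ih => cases k <;> simp [stirling2, Nat.stirlingSecond_succ_succ, ih]

theorem fall_neg_mul_neg_one_pow (m i : ℕ) : fall (-m) i * (-1) ^ i = m.ascFactorial i := by
  rw [fall, Nat.ascFactorial_eq_prod_range, show ((-1 : ℚ)) ^ i = ∏ _j ∈ range i, (-1 : ℚ) by simp,
    ← prod_mul_distrib]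
  push_cast
  exact prod_congr rfl fun j _ => by ring

namespace Nat

theorem sum_range_choose_mul_stirlingSecond (n i : ℕ) :
    ∑ k ∈ range (n + 1), n.choose k * stirlingSecond k i = stirlingSecond (n + 1) (i + 1) := by
  induction n generalizing i with
  | zero => cases i <;> rfl
  | succ n ih =>
    have pascal := sum_choose_succ_mul (R := ℕ) (fun k _ => stirlingSecond k i) n
    simp only [Nat.cast_id] at pascal
    rw [pascal, ih]
    cases i with
    | zero => simp [stirlingSecond_succ_succ]
    | succ j =>
      simp only [stirlingSecond_succ_succ, mul_add, sum_add_distrib, mul_left_comm _ (j + 1),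
        ← mul_sum, ih]
      ring

theorem succ_ascFactorial_succ (m i : ℕ) :
    (m + 1).ascFactorial (i + 1) = m.ascFactorial (i + 1) + (i + 1) * (m + 1).ascFactorial i := by
  have h := succ_ascFactorial m i
  rw [succ_eq_add_one] at h
  rw [ascFactorial_succ, ascFactorial_succ, ← h]
  ring

end Nat

/-- Fubini numbers of order `m`: `k!` times the `k`-th coefficient of `(2 - e^t)^{-m}`; for `m = 1`
the ordered Bell numbers. -/
def fubini (m k : ℕ) : ℕ := ∑ i ∈ range (k + 1), m.ascFactorial i * Nat.stirlingSecond k i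

theorem fubini_eq_sum_range {m k N : ℕ} (h : k < N) :
    fubini m k = ∑ i ∈ range N, m.ascFactorial i * Nat.stirlingSecond k i := by
  refine sum_subset (range_subset_range.2 h) fun i _ hi => ?_
  rw [Nat.stirlingSecond_eq_zero_of_lt (by simpa using hi), mul_zero]

theorem fubini_zero_left (k : ℕ) : fubini 0 k = if k = 0 then 1 else 0 := by
  rw [fubini, sum_range_succ']
  cases k <;> simp [Nat.zero_ascFactorial]

theorem fubini_add_sum_choose_mul_fubini_succ (m n : ℕ) :
    fubini m n + ∑ k ∈ range (n + 1), n.choose k * fubini (m + 1) k = 2 * fubini (m + 1) n := by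
  have swap : ∑ k ∈ range (n + 1), n.choose k * fubini (m + 1) k =
      ∑ i ∈ range (n + 1), (m + 1).ascFactorial i * Nat.stirlingSecond (n + 1) (i + 1) := by
    calc _ = ∑ k ∈ range (n + 1), ∑ i ∈ range (n + 1),
          (m + 1).ascFactorial i * (n.choose k * Nat.stirlingSecond k i) := by
          refine sum_congr rfl fun k hk => ?_
          rw [fubini_eq_sum_range (by simpa using hk : k < n + 1), mul_sum]
          exact sum_congr rfl fun i _ => by ring
      _ = _ := by
          rw [sum_comm]
          simp only [← mul_sum, Nat.sum_range_choose_mul_stirlingSecond]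
  have shift : fubini m n + ∑ i ∈ range (n + 1),
      (m + 1).ascFactorial i * ((i + 1) * Nat.stirlingSecond n (i + 1)) = fubini (m + 1) n := by
    rw [fubini_eq_sum_range (by omega : n < n + 2), fubini_eq_sum_range (by omega : n < n + 2),
      sum_range_succ' _ (n + 1), sum_range_succ' _ (n + 1), add_right_comm, ← sum_add_distrib,
      Nat.ascFactorial_zero, Nat.ascFactorial_zero]
    congr 1
    refine sum_congr rfl fun i _ => ?_
    rw [Nat.succ_ascFactorial_succ]
    ring
  have hdef : ∑ i ∈ range (n + 1), (m + 1).ascFactorial i * Nat.stirlingSecond n i =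
      fubini (m + 1) n := rfl
  rw [swap]
  simp only [Nat.stirlingSecond_succ_succ, mul_add, sum_add_distrib, hdef]
  omega

theorem sum_fall_neg_mul_stirling2 (m k : ℕ) :
    ∑ i ∈ range (k + 1), fall (-m) i * (-1) ^ i * (stirling2 k i : ℚ) = fubini m k := by
  rw [fubini, stirling2_eq_stirlingSecond]
  push_cast
  exact sum_congr rfl fun i _ => by rw [fall_neg_mul_neg_one_pow]

theorem coeff_mk_div_factorial_mul (f g : ℕ → ℚ) (n : ℕ) :
    coeff n ((mk fun k => f k / k.factorial) * mk fun k => g k / k.factorial) =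
      (∑ k ∈ range (n + 1), n.choose k * f k * g (n - k)) / n.factorial := by
  rw [coeff_mul, Nat.sum_antidiagonal_eq_sum_range_succ_mk, sum_div]
  refine sum_congr rfl fun k hk => ?_
  have hkn : k ≤ n := Nat.lt_succ_iff.1 (mem_range.1 hk)
  rw [coeff_mk, coeff_mk, Nat.cast_choose ℚ hkn]
  field_simp

def fubiniSeries (m : ℕ) : ℚ⟦X⟧ := mk fun k => (fubini m k : ℚ) / k.factorial

theorem fubiniSeries_zero : fubiniSeries 0 = 1 := by
  ext n
  rw [fubiniSeries, coeff_mk, coeff_one, fubini_zero_left]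
  split_ifs <;> simp_all

theorem two_sub_exp_mul_fubiniSeries_succ (m : ℕ) :
    (2 - exp ℚ) * fubiniSeries (m + 1) = fubiniSeries m := by
  ext n
  have hexp : exp ℚ = mk fun k => (1 : ℚ) / k.factorial := by ext; simp [coeff_exp]
  have key := congrArg (Nat.cast (R := ℚ)) (fubini_add_sum_choose_mul_fubini_succ m n)
  push_cast at key
  unfold fubiniSeries
  rw [sub_mul, map_sub, mul_comm (exp ℚ), hexp, ← map_ofNat C 2, coeff_C_mul,
    coeff_mk_div_factorial_mul, coeff_mk, coeff_mk]
  simp only [mul_one]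
  field_simp
  linarith

theorem two_sub_exp_pow_mul_fubiniSeries (m : ℕ) : (2 - exp ℚ) ^ m * fubiniSeries m = 1 := by
  induction m with
  | zero => rw [pow_zero, one_mul, fubiniSeries_zero]
  | succ m ih => rw [pow_succ, mul_assoc, two_sub_exp_mul_fubiniSeries_succ, ih]

theorem apostolEuler_explicit (α : ℕ) (E : ℕ → ℚ → ℚ)
    (hE : ∀ x : ℚ,
      (PowerSeries.C (R := ℚ) (-(1 / 2)) * PowerSeries.exp ℚ + 1) ^ (2 * α) *
          PowerSeries.mk (fun n => E n x / n.factorial) =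
        (2 : PowerSeries ℚ) ^ (2 * α) * PowerSeries.mk (fun n => x ^ n / n.factorial))
    (n : ℕ) (x : ℚ) :
    E n x = 2 ^ (4 * α) * ∑ k ∈ Finset.range (n + 1), (n.choose k : ℚ) *
        (∑ i ∈ Finset.range (k + 1),
          fall (-(2 * α : ℚ)) i * (-1 : ℚ) ^ i * (stirling2 k i : ℚ)) * x ^ (n - k) := by
  have hgen := hE x
  set Ex := mk fun n => E n x / n.factorial
  set xs := mk fun n => x ^ n / n.factorial
  have hhalf : (2 : ℚ⟦X⟧) - exp ℚ = 2 * (C (-(1 / 2)) * exp ℚ + 1) := by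
    rw [← map_ofNat C 2, mul_add, ← mul_assoc, ← map_mul]
    norm_num
    ring
  have hcleared : (2 - exp ℚ) ^ (2 * α) * Ex = C (2 ^ (4 * α)) * xs := by
    rw [hhalf, mul_pow, mul_assoc, hgen, ← mul_assoc, ← pow_add, ← two_mul, ← mul_assoc,
      ← map_ofNat C 2, ← map_pow]
    norm_num
  have hsolved : Ex = C (2 ^ (4 * α)) * (fubiniSeries (2 * α) * xs) := by
    calc Ex = ((2 - exp ℚ) ^ (2 * α) * fubiniSeries (2 * α)) * Ex := by
          rw [two_sub_exp_pow_mul_fubiniSeries, one_mul]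
      _ = fubiniSeries (2 * α) * ((2 - exp ℚ) ^ (2 * α) * Ex) := by ring
      _ = _ := by rw [hcleared]; ring
  have hcoeff := congrArg (coeff n) hsolved
  rw [coeff_mk, coeff_C_mul, fubiniSeries, coeff_mk_div_factorial_mul] at hcoeff
  have hfubini := fun k => sum_fall_neg_mul_stirling2 (2 * α) k
  push_cast at hfubini
  simp only [hfubini]
  field_simp at hcoeff
  exact hcoeff
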